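/- arXiv:0902.2544 — 2 statements merged into one kernel-verified Lean document; each statement's English description precedes it below -/
import Mathlib

section
/- Let f be C^1 on (0,1) with f' < 0 and x·f'(x) = (1-x)·f'(1-x), let d(x,y) = y·(f(x)-f(y)) + (1-y)·(f(1-x)-f(1-y)), let θ₀ ∈ (0,1), and let π be a Borel probability measure on (0,1) charging every neighborhood of θ₀. Then for i.i.d. Bernoulli(θ₀) observations with sample mean θ̄ₙ, the generalized posterior πₙ(A) = ∫_A e^{-n d(t,θ̄ₙ)} dπ(t) / ∫_{(0,1)} e^{-n d(t,θ̄ₙ)} dπ(t) satisfies πₙ((θ₀-ε, θ₀+ε)) → 1 almost surely for every ε > 0. -/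
/-!
For a fixed `y ∈ (0, 1)` the properness relation `x f'(x) = (1 - x) f'(1 - x)` gives
`∂ₓ d(x, y) = (y - x) f'(x) / (1 - x)`, so `d(·, y)` decreases strictly on `(0, y]`, increases
strictly on `[y, 1)` and vanishes at `y`. Once the sample mean `θ̄ₙ` is close to `θ₀` (which happens
almost surely by the strong law of large numbers), this yields `δ > 0` with `d(t, θ̄ₙ) ≥ δ` for `t`
outside `(θ₀ - ε, θ₀ + ε)` and, by joint continuity of `d` at `(θ₀, θ₀)`, `d(t, θ̄ₙ) ≤ δ / 2` on a
small interval around `θ₀` of positive prior mass `c`. Hence the posterior mass of the complement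
of `(θ₀ - ε, θ₀ + ε)` is at most `e^{-nδ} / (c e^{-nδ/2}) → 0`.
-/

open MeasureTheory Set Filter Topology ProbabilityTheory unitInterval

theorem exists_ball_eventually_mem {ι α β γ : Type*} [PseudoMetricSpace α] [TopologicalSpace β]
    [TopologicalSpace γ] {F : α → β → γ} {x : α} {y₀ : β} {l : Filter ι} {y : ι → β}
    (hF : ContinuousAt (Function.uncurry F) (x, y₀)) (hy : Tendsto y l (𝓝 y₀)) {V : Set γ}
    (hV : V ∈ 𝓝 (F x y₀)) :
    ∃ η > (0 : ℝ), ∀ᶠ n in l, ∀ t ∈ Metric.ball x η, F t (y n) ∈ V := by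
  have hFV : ∀ᶠ p in 𝓝 x ×ˢ 𝓝 y₀, Function.uncurry F p ∈ V := by
    rw [← nhds_prod_eq]
    exact hF.eventually_mem hV
  obtain ⟨pa, hpa, pb, hpb, hF⟩ := eventually_prod_iff.1 hFV
  obtain ⟨η, hη, hball⟩ := Metric.eventually_nhds_iff_ball.1 hpa
  exact ⟨η, hη, (hy.eventually hpb).mono fun n hn t ht => hF (hball t ht) hn⟩

section Concentration

variable {ι α : Type*} [MeasurableSpace α] {μ : Measure α} [IsFiniteMeasure μ] {U B : Set α}

theorem one_sub_le_setIntegral_div_integral {w : α → ℝ} {l u : ℝ} (hU : MeasurableSet U)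
    (hB : MeasurableSet B) (hμB : μ B ≠ 0) (hl : 0 < l) (hint : Integrable w μ)
    (hw : 0 ≤ᵐ[μ] w) (hwB : ∀ᵐ t ∂μ, t ∈ B → l ≤ w t) (hwU : ∀ᵐ t ∂μ, t ∉ U → w t ≤ u) :
    1 - μ.real Uᶜ / μ.real B * (u / l) ≤ (∫ t in U, w t ∂μ) / ∫ t, w t ∂μ := by
  have hμB' : 0 < μ.real B := ENNReal.toReal_pos hμB (measure_ne_top μ B)
  have hmass : μ.real B * l ≤ ∫ t, w t ∂μ := calc
    μ.real B * l = ∫ t in B, l ∂μ := by rw [setIntegral_const, smul_eq_mul]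
    _ ≤ ∫ t in B, w t ∂μ := setIntegral_mono_on_ae integrableOn_const hint.integrableOn hB hwB
    _ ≤ ∫ t, w t ∂μ := setIntegral_le_integral hint hw
  have htail : ∫ t in Uᶜ, w t ∂μ ≤ μ.real Uᶜ * u := calc
    ∫ t in Uᶜ, w t ∂μ ≤ ∫ t in Uᶜ, u ∂μ :=
      setIntegral_mono_on_ae hint.integrableOn integrableOn_const hU.compl hwU
    _ = μ.real Uᶜ * u := by rw [setIntegral_const, smul_eq_mul]
  have hD : 0 < ∫ t, w t ∂μ := (by positivity : 0 < μ.real B * l).trans_le hmass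
  have hsplit : (∫ t in U, w t ∂μ) / ∫ t, w t ∂μ = 1 - (∫ t in Uᶜ, w t ∂μ) / ∫ t, w t ∂μ := by
    rw [eq_sub_iff_add_eq, ← add_div, integral_add_compl hU hint, div_self hD.ne']
  rw [hsplit]
  gcongr 1 - ?_
  calc (∫ t in Uᶜ, w t ∂μ) / ∫ t, w t ∂μ ≤ μ.real Uᶜ * u / (μ.real B * l) :=
        div_le_div₀ ((setIntegral_nonneg_of_ae hw).trans htail) htail (by positivity) hmass
    _ = μ.real Uᶜ / μ.real B * (u / l) := by field_simp

theorem tendsto_setIntegral_div_integral_nhds_one {L : Filter ι} {w : ι → α → ℝ} {l u : ι → ℝ}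
    (hU : MeasurableSet U) (hB : MeasurableSet B) (hμB : μ B ≠ 0) (hl : ∀ n, 0 < l n)
    (hlu : Tendsto (fun n => u n / l n) L (𝓝 0))
    (hw : ∀ᶠ n in L, Integrable (w n) μ ∧ 0 ≤ᵐ[μ] w n ∧ (∀ᵐ t ∂μ, t ∈ B → l n ≤ w n t) ∧
      ∀ᵐ t ∂μ, t ∉ U → w n t ≤ u n) :
    Tendsto (fun n => (∫ t in U, w n t ∂μ) / ∫ t, w n t ∂μ) L (𝓝 1) := by
  have hlower : Tendsto (fun n => 1 - μ.real Uᶜ / μ.real B * (u n / l n)) L (𝓝 1) := by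
    simpa using tendsto_const_nhds.sub (hlu.const_mul (μ.real Uᶜ / μ.real B))
  refine tendsto_of_tendsto_of_tendsto_of_le_of_le' hlower tendsto_const_nhds ?_ ?_ <;>
    filter_upwards [hw] with n ⟨hint, hw0, hwB, hwU⟩
  · exact one_sub_le_setIntegral_div_integral hU hB hμB (hl n) hint hw0 hwB hwU
  · exact div_le_one_of_le₀ (setIntegral_le_integral hint hw0) (integral_nonneg_of_ae hw0)

end Concentration

section Bernoulli

variable {Ω : Type*} [MeasurableSpace Ω] {P : Measure Ω} [IsProbabilityMeasure P]

theorem hasLaw_bernoulliMeasure {X : Ω → ℝ} (hXm : Measurable X)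
    (hX : ∀ ω, X ω = 0 ∨ X ω = 1) {p : I} (hp : P {ω | X ω = 1} = ENNReal.ofReal p) :
    HasLaw X Ber(1, 0, p) P := by
  classical
  refine ⟨hXm.aemeasurable, Measure.ext fun s hs => ?_⟩
  have hp' : P {ω | X ω = 1} = toNNReal p := by
    rw [hp, ENNReal.ofReal, ← coe_toNNReal p, Real.toNNReal_coe]
  rw [Measure.map_apply hXm hs, bernoulliMeasure_apply p hs]
  split_ifs with h1 h0 h0
  · convert measure_univ (μ := P)
    exact eq_univ_of_forall fun ω => by rcases hX ω with h | h <;> simp [h, h0, h1]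
  · convert hp' using 2
    ext ω
    rcases hX ω with h | h <;> simp [h, h0, h1]
  · have hE : MeasurableSet {ω | X ω = 1} := hXm (measurableSet_singleton 1)
    have hpre : X ⁻¹' s = {ω | X ω = 1}ᶜ := by
      ext ω
      rcases hX ω with h | h <;> simp [h, h0, h1]
    rw [hpre, prob_compl_eq_one_sub hE, hp', ← ENNReal.coe_one, ← toNNReal_add_toNNReal_symm p,
      ENNReal.coe_add, ENNReal.add_sub_cancel_left ENNReal.coe_ne_top]
  · convert measure_empty (μ := P)
    exact eq_empty_of_forall_notMem fun ω => by rcases hX ω with h | h <;> simp [h, h0, h1]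

theorem strong_law_bernoulli {X : ℕ → Ω → ℝ} (hXm : ∀ i, Measurable (X i))
    (hindep : iIndepFun X P) (hX : ∀ i ω, X i ω = 0 ∨ X i ω = 1) {p : I}
    (hp : ∀ i, P {ω | X i ω = 1} = ENNReal.ofReal p) :
    ∀ᵐ ω ∂P, Tendsto (fun n : ℕ => (∑ i ∈ Finset.range n, X i ω) / n) atTop (𝓝 p) := by
  have hlaw i := hasLaw_bernoulliMeasure (hXm i) (hX i) (hp i)
  have hmean : P[X 0] = (p : ℝ) := by simp [(hlaw 0).integral_eq, integral_bernoulliMeasure]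
  have hint : Integrable (X 0) P := Integrable.of_mem_Icc 0 1 (hXm 0).aemeasurable
    (ae_of_all _ fun ω => by rcases hX 0 ω with h | h <;> simp [h])
  simpa [hmean] using strong_law_ae_real X hint (fun i j hij => hindep.indepFun hij)
    fun i => (hlaw i).identDistrib (hlaw 0)

end Bernoulli

def scoringDivergence (f : ℝ → ℝ) (x y : ℝ) : ℝ :=
  y * (f x - f y) + (1 - y) * (f (1 - x) - f (1 - y))

@[simp]
theorem scoringDivergence_self (f : ℝ → ℝ) (y : ℝ) : scoringDivergence f y y = 0 := by
  simp [scoringDivergence]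

theorem continuousOn_scoringDivergence {f : ℝ → ℝ} (hf : ContinuousOn f (Ioo 0 1)) :
    ContinuousOn (Function.uncurry (scoringDivergence f)) (Ioo 0 1 ×ˢ Ioo 0 1) := by
  have hf' : ContinuousOn (fun x => f (1 - x)) (Ioo 0 1) :=
    hf.comp (continuousOn_const.sub continuousOn_id) fun x hx => Ioo.one_sub_mem hx
  exact (continuousOn_snd.mul ((hf.comp continuousOn_fst fun p hp => hp.1).sub
      (hf.comp continuousOn_snd fun p hp => hp.2))).add
    ((continuousOn_const.sub continuousOn_snd).mul ((hf'.comp continuousOn_fst fun p hp => hp.1).sub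
      (hf'.comp continuousOn_snd fun p hp => hp.2)))

theorem hasDerivAt_scoringDivergence_left {f f' : ℝ → ℝ} {t : ℝ} (ht : HasDerivAt f (f' t) t)
    (ht' : HasDerivAt f (f' (1 - t)) (1 - t)) (y : ℝ) :
    HasDerivAt (fun x => scoringDivergence f x y) (y * f' t - (1 - y) * f' (1 - t)) t := by
  have h : HasDerivAt (fun x => scoringDivergence f x y) _ t :=
    ((ht.sub_const (f y)).const_mul y).add
      (((ht'.comp t ((hasDerivAt_id t).const_sub 1)).sub_const (f (1 - y))).const_mul (1 - y))
  convert h using 1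
  ring

structure IsStrictlyProperScore (f f' : ℝ → ℝ) : Prop where
  hasDerivAt : ∀ x ∈ Ioo (0 : ℝ) 1, HasDerivAt f (f' x) x
  deriv_neg : ∀ x ∈ Ioo (0 : ℝ) 1, f' x < 0
  proper : ∀ x ∈ Ioo (0 : ℝ) 1, x * f' x = (1 - x) * f' (1 - x)

namespace IsStrictlyProperScore

variable {f f' : ℝ → ℝ}

theorem continuousAt_scoringDivergence (hf : IsStrictlyProperScore f f') {x y : ℝ}
    (hx : x ∈ Ioo (0 : ℝ) 1) (hy : y ∈ Ioo (0 : ℝ) 1) :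
    ContinuousAt (Function.uncurry (scoringDivergence f)) (x, y) :=
  (continuousOn_scoringDivergence fun t ht => (hf.hasDerivAt t ht).continuousAt.continuousWithinAt
    ).continuousAt (prod_mem_nhds (Ioo_mem_nhds hx.1 hx.2) (Ioo_mem_nhds hy.1 hy.2))

theorem hasDerivAt_scoringDivergence (hf : IsStrictlyProperScore f f') {t : ℝ}
    (ht : t ∈ Ioo (0 : ℝ) 1) (y : ℝ) :
    HasDerivAt (fun x => scoringDivergence f x y) ((y - t) * f' t / (1 - t)) t := by
  convert hasDerivAt_scoringDivergence_left (hf.hasDerivAt t ht)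
    (hf.hasDerivAt _ (Ioo.one_sub_mem ht)) y using 1
  rw [div_eq_iff (by linarith [ht.2])]
  linear_combination (y - 1) * hf.proper t ht

theorem strictAntiOn_scoringDivergence (hf : IsStrictlyProperScore f f') {y : ℝ} (hy : y < 1) :
    StrictAntiOn (fun x => scoringDivergence f x y) (Ioc 0 y) := by
  have hmem : ∀ t ∈ Ioc 0 y, t ∈ Ioo (0 : ℝ) 1 := fun t ht => ⟨ht.1, ht.2.trans_lt hy⟩
  refine strictAntiOn_of_deriv_neg (convex_Ioc 0 y) (fun t ht =>
    (hf.hasDerivAt_scoringDivergence (hmem t ht) y).continuousAt.continuousWithinAt)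
    fun t ht => ?_
  rw [interior_Ioc] at ht
  have ht' := hmem t (Ioo_subset_Ioc_self ht)
  rw [(hf.hasDerivAt_scoringDivergence ht' y).deriv]
  exact div_neg_of_neg_of_pos (mul_neg_of_pos_of_neg (by linarith [ht.2]) (hf.deriv_neg t ht'))
    (by linarith [ht'.2])

theorem strictMonoOn_scoringDivergence (hf : IsStrictlyProperScore f f') {y : ℝ} (hy : 0 < y) :
    StrictMonoOn (fun x => scoringDivergence f x y) (Ico y 1) := by
  have hmem : ∀ t ∈ Ico y 1, t ∈ Ioo (0 : ℝ) 1 := fun t ht => ⟨hy.trans_le ht.1, ht.2⟩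
  refine strictMonoOn_of_deriv_pos (convex_Ico y 1) (fun t ht =>
    (hf.hasDerivAt_scoringDivergence (hmem t ht) y).continuousAt.continuousWithinAt)
    fun t ht => ?_
  rw [interior_Ico] at ht
  have ht' := hmem t (Ioo_subset_Ico_self ht)
  rw [(hf.hasDerivAt_scoringDivergence ht' y).deriv]
  exact div_pos (mul_pos_of_neg_of_neg (by linarith [ht.1]) (hf.deriv_neg t ht'))
    (by linarith [ht.2])

theorem scoringDivergence_nonneg (hf : IsStrictlyProperScore f f') {x y : ℝ}
    (hx : x ∈ Ioo (0 : ℝ) 1) (hy : y ∈ Ioo (0 : ℝ) 1) : 0 ≤ scoringDivergence f x y := by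
  rcases le_total x y with hxy | hxy
  · simpa using (hf.strictAntiOn_scoringDivergence hy.2).antitoneOn ⟨hx.1, hxy⟩ ⟨hy.1, le_rfl⟩ hxy
  · simpa using (hf.strictMonoOn_scoringDivergence hy.1).monotoneOn ⟨le_rfl, hy.2⟩ ⟨hxy, hx.2⟩ hxy

theorem integrable_exp_neg_mul_scoringDivergence (hf : IsStrictlyProperScore f f')
    {π : Measure ℝ} [IsFiniteMeasure π] (hπ : ∀ᵐ t ∂π, t ∈ Ioo (0 : ℝ) 1) {y c : ℝ}
    (hy : y ∈ Ioo (0 : ℝ) 1) (hc : 0 ≤ c) :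
    Integrable (fun t => Real.exp (-c * scoringDivergence f t y)) π := by
  rw [← Measure.restrict_eq_self_of_ae_mem hπ]
  have hcont : ContinuousOn (fun t => Real.exp (-c * scoringDivergence f t y)) (Ioo 0 1) :=
    (continuousOn_const.mul fun t ht =>
      (hf.hasDerivAt_scoringDivergence ht y).continuousAt.continuousWithinAt).rexp
  refine Integrable.of_mem_Icc 0 1 (hcont.aemeasurable measurableSet_Ioo) ?_
  filter_upwards [ae_restrict_mem measurableSet_Ioo] with t ht
  exact ⟨(Real.exp_pos _).le, Real.exp_le_one_iff.2 (mul_nonpos_of_nonpos_of_nonneg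
    (neg_nonpos.2 hc) (hf.scoringDivergence_nonneg ht hy))⟩

theorem exists_pos_eventually_le_scoringDivergence (hf : IsStrictlyProperScore f f') {θ₀ ε : ℝ}
    (hθ₀ : θ₀ ∈ Ioo (0 : ℝ) 1) (hε : 0 < ε) {y : ℕ → ℝ} (hy : Tendsto y atTop (𝓝 θ₀)) :
    ∃ δ > (0 : ℝ), ∀ᶠ n in atTop, ∀ t ∈ Ioo (0 : ℝ) 1,
      t ∉ Ioo (θ₀ - ε) (θ₀ + ε) → δ ≤ scoringDivergence f t (y n) := by
  obtain ⟨a, ha, haθ⟩ := exists_between (max_lt (sub_lt_self θ₀ hε) hθ₀.1)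
  obtain ⟨b, hθb, hb⟩ := exists_between (lt_min (lt_add_of_pos_right θ₀ hε) hθ₀.2)
  rw [max_lt_iff] at ha
  rw [lt_min_iff] at hb
  have hda : 0 < scoringDivergence f a θ₀ := by
    simpa using hf.strictAntiOn_scoringDivergence hθ₀.2 ⟨ha.2, haθ.le⟩ ⟨hθ₀.1, le_rfl⟩ haθ
  have hdb : 0 < scoringDivergence f b θ₀ := by
    simpa using hf.strictMonoOn_scoringDivergence hθ₀.1 ⟨le_rfl, hθ₀.2⟩ ⟨hθb.le, hb.2⟩ hθb
  have htends : ∀ x ∈ Ioo (0 : ℝ) 1,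
      Tendsto (fun n => scoringDivergence f x (y n)) atTop (𝓝 (scoringDivergence f x θ₀)) :=
    fun x hx => (hf.continuousAt_scoringDivergence hx hθ₀).tendsto.comp
      (tendsto_const_nhds.prodMk_nhds hy)
  have hδ := half_lt_self (lt_min hda hdb)
  refine ⟨_, half_pos (lt_min hda hdb), ?_⟩
  filter_upwards [(htends a ⟨ha.2, haθ.trans hθ₀.2⟩).eventually
      (lt_mem_nhds (hδ.trans_le (min_le_left _ _))),
    (htends b ⟨hθ₀.1.trans hθb, hb.2⟩).eventually (lt_mem_nhds (hδ.trans_le (min_le_right _ _))),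
    hy.eventually (Ioo_mem_nhds haθ hθb)] with n hna hnb hyn t ht htU
  rw [mem_Ioo, not_and_or, not_lt, not_lt] at htU
  rcases htU with htU | htU
  · have hta : t ≤ a := by linarith [ha.1]
    linarith [(hf.strictAntiOn_scoringDivergence (hyn.2.trans hb.2)).antitoneOn
      ⟨ht.1, hta.trans hyn.1.le⟩ ⟨ha.2, hyn.1.le⟩ hta]
  · have hbt : b ≤ t := by linarith [hb.1]
    linarith [(hf.strictMonoOn_scoringDivergence (ha.2.trans hyn.1)).monotoneOn
      ⟨hyn.2.le, hb.2⟩ ⟨hyn.2.le.trans hbt, ht.2⟩ hbt]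

theorem tendsto_setIntegral_exp_div_integral_exp (hf : IsStrictlyProperScore f f') {θ₀ ε : ℝ}
    (hθ₀ : θ₀ ∈ Ioo (0 : ℝ) 1) (π : Measure ℝ) [IsFiniteMeasure π]
    (hπ : ∀ᵐ t ∂π, t ∈ Ioo (0 : ℝ) 1) (hcharge : ∀ ε > 0, 0 < π (Ioo (θ₀ - ε) (θ₀ + ε)))
    {y : ℕ → ℝ} (hy : Tendsto y atTop (𝓝 θ₀)) (hε : 0 < ε) :
    Tendsto (fun n : ℕ => (∫ t in Ioo (θ₀ - ε) (θ₀ + ε),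
        Real.exp (-(n : ℝ) * scoringDivergence f t (y n)) ∂π) /
      ∫ t, Real.exp (-(n : ℝ) * scoringDivergence f t (y n)) ∂π) atTop (𝓝 1) := by
  obtain ⟨δ, hδ, hfar⟩ := hf.exists_pos_eventually_le_scoringDivergence hθ₀ hε hy
  obtain ⟨η, hη, hnear⟩ := exists_ball_eventually_mem (hf.continuousAt_scoringDivergence hθ₀ hθ₀)
    hy (V := Iio (δ / 2)) (Iio_mem_nhds (by simpa using half_pos hδ))
  have hrate : Tendsto (fun n : ℕ => Real.exp (-n * δ) / Real.exp (-n * (δ / 2))) atTop (𝓝 0) :=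
    (Real.tendsto_exp_atBot.comp (tendsto_natCast_atTop_atTop.const_mul_atTop_of_neg
      (neg_lt_zero.2 (half_pos hδ)))).congr fun n => by
        rw [Function.comp_apply, ← Real.exp_sub]
        ring_nf
  refine tendsto_setIntegral_div_integral_nhds_one measurableSet_Ioo measurableSet_Ioo
    (hcharge η hη).ne' (fun n => Real.exp_pos _) hrate ?_
  filter_upwards [hfar, hnear, hy.eventually (Ioo_mem_nhds hθ₀.1 hθ₀.2)] with n hfar hnear hyn
  have hn : -(n : ℝ) ≤ 0 := neg_nonpos.2 n.cast_nonneg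
  refine ⟨hf.integrable_exp_neg_mul_scoringDivergence hπ hyn n.cast_nonneg,
    ae_of_all _ fun t => (Real.exp_pos _).le, ae_of_all _ fun t ht => ?_, ?_⟩
  · rw [← Real.ball_eq_Ioo] at ht
    exact Real.exp_le_exp.2 (mul_le_mul_of_nonpos_left (mem_Iio.1 (hnear t ht)).le hn)
  · filter_upwards [hπ] with t ht htU
    exact Real.exp_le_exp.2 (mul_le_mul_of_nonpos_left (hfar t ht htU) hn)

end IsStrictlyProperScore

theorem generalized_posterior_consistency_general
    {Ω : Type*} [MeasurableSpace Ω] (P : Measure Ω) [IsProbabilityMeasure P]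
    (θ₀ : ℝ) (hθ₀ : θ₀ ∈ Ioo (0:ℝ) 1)
    (X : ℕ → Ω → ℝ) (hmeas : ∀ i, Measurable (X i))
    (hindep : ProbabilityTheory.iIndepFun X P)
    (hvals : ∀ i ω, X i ω = 0 ∨ X i ω = 1)
    (hlaw : ∀ i, P {ω | X i ω = 1} = ENNReal.ofReal θ₀)
    (π : Measure ℝ) [IsProbabilityMeasure π] (hπsupp : π (Set.Ioo (0:ℝ) 1)ᶜ = 0)
    (hcharge : ∀ ε > 0, 0 < π (Set.Ioo (θ₀ - ε) (θ₀ + ε)))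
    (f f' : ℝ → ℝ)
    (hderiv : ∀ x ∈ Ioo (0:ℝ) 1, HasDerivAt f (f' x) x)
    (hneg : ∀ x ∈ Ioo (0:ℝ) 1, f' x < 0)
    (hfe : ∀ x ∈ Ioo (0:ℝ) 1, x * f' x = (1 - x) * f' (1 - x))
    (d : ℝ → ℝ → ℝ)
    (hd : ∀ x y, d x y = y * (f x - f y) + (1 - y) * (f (1 - x) - f (1 - y)))
    (mean : ℕ → Ω → ℝ)
    (hmean : ∀ n ω, mean n ω = (∑ i ∈ Finset.range n, X i ω) / n)
    (post : ℕ → Ω → Set ℝ → ℝ)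
    (hpost : ∀ n ω A, post n ω A =
      (∫ t in A, Real.exp (-(n : ℝ) * d t (mean n ω)) ∂π) /
      (∫ t in Set.Ioo (0:ℝ) 1, Real.exp (-(n : ℝ) * d t (mean n ω)) ∂π)) :
    ∀ ε > 0, ∀ᵐ ω ∂P,
      Tendsto (fun n => post n ω (Set.Ioo (θ₀ - ε) (θ₀ + ε))) atTop (nhds 1) := by
  intro ε hε
  have hf : IsStrictlyProperScore f f' := ⟨hderiv, hneg, hfe⟩
  obtain rfl : d = scoringDivergence f := funext₂ hd
  have hπ : ∀ᵐ t ∂π, t ∈ Ioo (0 : ℝ) 1 := mem_ae_iff.2 hπsupp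
  filter_upwards [strong_law_bernoulli hmeas hindep hvals (p := ⟨θ₀, hθ₀.1.le, hθ₀.2.le⟩) hlaw]
    with ω hω
  simp_rw [hpost, hmean, Measure.restrict_eq_self_of_ae_mem hπ]
  exact hf.tendsto_setIntegral_exp_div_integral_exp hθ₀ π hπ hcharge hω hε

theorem generalized_posterior_consistency
    {Ω : Type*} [MeasurableSpace Ω] (P : Measure Ω) [IsProbabilityMeasure P]
    (θ₀ : ℝ) (hθ₀ : θ₀ ∈ Ioo (0:ℝ) 1)
    (X : ℕ → Ω → ℝ) (hmeas : ∀ i, Measurable (X i))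
    (hindep : ProbabilityTheory.iIndepFun X P)
    (hvals : ∀ i ω, X i ω = 0 ∨ X i ω = 1)
    (hlaw : ∀ i, P {ω | X i ω = 1} = ENNReal.ofReal θ₀)
    (π : Measure ℝ) [IsProbabilityMeasure π] (hπsupp : π (Set.Ioo (0:ℝ) 1)ᶜ = 0)
    (hcharge : ∀ ε > 0, 0 < π (Set.Ioo (θ₀ - ε) (θ₀ + ε)))
    (f f' : ℝ → ℝ)
    (hderiv : ∀ x ∈ Ioo (0:ℝ) 1, HasDerivAt f (f' x) x)
    (hcont : ContinuousOn f' (Ioo (0:ℝ) 1))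
    (hneg : ∀ x ∈ Ioo (0:ℝ) 1, f' x < 0)
    (hfe : ∀ x ∈ Ioo (0:ℝ) 1, x * f' x = (1 - x) * f' (1 - x))
    (d : ℝ → ℝ → ℝ)
    (hd : ∀ x y, d x y = y * (f x - f y) + (1 - y) * (f (1 - x) - f (1 - y)))
    (mean : ℕ → Ω → ℝ)
    (hmean : ∀ n ω, mean n ω = (∑ i ∈ Finset.range n, X i ω) / n)
    (post : ℕ → Ω → Set ℝ → ℝ)
    (hpost : ∀ n ω A, post n ω A =
      (∫ t in A, Real.exp (-(n : ℝ) * d t (mean n ω)) ∂π) /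
      (∫ t in Set.Ioo (0:ℝ) 1, Real.exp (-(n : ℝ) * d t (mean n ω)) ∂π)) :
    ∀ ε > 0, ∀ᵐ ω ∂P,
      Tendsto (fun n => post n ω (Set.Ioo (θ₀ - ε) (θ₀ + ε))) atTop (nhds 1) :=
  generalized_posterior_consistency_general P θ₀ hθ₀ X hmeas hindep hvals hlaw π hπsupp hcharge f f'
    hderiv hneg hfe d hd mean hmean post hpost
end

section
/- Let p : (0,1) → [0,∞) be continuous and integrable, θ₀ ∈ (0,1), b ∈ (θ₀, 1), p(b) > 0, and let d(t,θ₀) be the Bernoulli KL divergence (as a function of t, strictly increasing on (θ₀,1)). Then as n → ∞, ∫_{(b,1)} p(s)·e^{-n·d(s,θ₀)} ds ∼ (1/n)·(p(b)/d'(b))·e^{-n·d(b,θ₀)}, where d'(b) = ∂d(t,θ₀)/∂t at t = b. -/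
/-!
Near `b` we have `p ≈ p b` and `d s - d b ≈ d'(b) (s - b)`. Hence, for every `ε > 0`, the integral
of `p s e^{-n (d s - d b)}` over a short interval `(b, a')` lies between the integrals of
`(p b ∓ ε) e^{-n (d'(b) ± ε) (s - b)}`, which are `(p b ∓ ε) / (n (d'(b) ± ε))` up to exponentially
small errors. On `[a', 1)` the monotonicity of `d` gives `d s - d b ≥ Δ > 0`, so that part is
`O(e^{-n Δ}) = o(1 / n)`. Letting `ε → 0`, `n ∫ p s e^{-n (d s - d b)} ds → p b / d'(b)`, which is
the claim once the factor `e^{-n d b}` is pulled out of the integral.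
-/

open Set Filter MeasureTheory Topology Real

theorem integral_Ioo_exp_neg_mul_sub {α : ℝ} (hα : α ≠ 0) {a a' : ℝ} (h : a ≤ a') :
    ∫ s in Ioo a a', exp (-(α * (s - a))) = (1 - exp (-(α * (a' - a)))) / α := by
  rw [← integral_Ioc_eq_integral_Ioo, ← intervalIntegral.integral_of_le h]
  have := intervalIntegral.integral_comp_mul_sub (fun x => exp x) (neg_ne_zero.2 hα) (-(α * a))
    (a := a) (b := a')
  simp only [integral_exp] at this
  convert this using 2
  · ext s; ring_nf
  · rw [smul_eq_mul, show -α * a - -(α * a) = 0 by ring, exp_zero,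
      show -α * a' - -(α * a) = -(α * (a' - a)) by ring]
    field_simp
    ring

theorem tendsto_mul_integral_Ioo_exp_neg_mul_sub {α : ℝ} (hα : 0 < α) {a a' : ℝ}
    (h : a < a') :
    Tendsto (fun n : ℕ => n * ∫ s in Ioo a a', exp (-(n * (α * (s - a))))) atTop (𝓝 α⁻¹) := by
  have hexp : Tendsto (fun n : ℕ => exp (-(n * (α * (a' - a))))) atTop (𝓝 0) :=
    tendsto_exp_neg_atTop_nhds_zero.comp
      (tendsto_natCast_atTop_atTop.atTop_mul_const (mul_pos hα (sub_pos.2 h)))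
  have := (tendsto_const_nhds (x := (1 : ℝ)).sub hexp).div_const α
  rw [sub_zero, one_div] at this
  refine this.congr' ?_
  filter_upwards [eventually_ne_atTop 0] with n hn
  have hn : (n : ℝ) ≠ 0 := Nat.cast_ne_zero.2 hn
  simp only [← mul_assoc]
  rw [integral_Ioo_exp_neg_mul_sub (by positivity) h.le]
  field_simp

theorem tendsto_of_forall_eventually_mem_Icc {ι β γ : Type*} [LinearOrder γ]
    [TopologicalSpace γ] [OrderTopology γ] {F : Filter ι} [F.NeBot] {l : Filter β} {u : β → γ}
    {lo hi : ι → γ} {L : γ} (hlo : Tendsto lo F (𝓝 L)) (hhi : Tendsto hi F (𝓝 L))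
    (h : ∀ᶠ ε in F, ∀ᶠ x in l, u x ∈ Icc (lo ε) (hi ε)) : Tendsto u l (𝓝 L) := by
  rw [tendsto_order]
  constructor
  · intro y hy
    obtain ⟨ε, hε, hyε⟩ := (h.and (hlo.eventually (lt_mem_nhds hy))).exists
    filter_upwards [hε] with x hx using hyε.trans_le hx.1
  · intro y hy
    obtain ⟨ε, hε, hyε⟩ := (h.and (hhi.eventually (gt_mem_nhds hy))).exists
    filter_upwards [hε] with x hx using hx.2.trans_lt hyε

section Laplace

variable {p ψ φ : ℝ → ℝ} {a a' e c ε : ℝ}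

theorem integrableOn_mul_exp_neg_mul {S : Set ℝ} (hS : MeasurableSet S) (hp : IntegrableOn p S)
    (hψ_meas : AEMeasurable ψ (volume.restrict S)) (hψ : ∀ s ∈ S, 0 ≤ ψ s) {x : ℝ}
    (hx : 0 ≤ x) : IntegrableOn (fun s => p s * exp (-(x * ψ s))) S := by
  refine hp.mul_bdd (c := 1) (by fun_prop) ((ae_restrict_iff' hS).2 (ae_of_all _ fun s hs => ?_))
  rw [norm_of_nonneg (exp_pos _).le, exp_le_one_iff, neg_nonpos]
  exact mul_nonneg hx (hψ s hs)

theorem tendsto_mul_setIntegral_mul_exp_neg_mul_nhds_zero {S : Set ℝ} (hS : MeasurableSet S)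
    (hp : IntegrableOn p S) (hp_nonneg : ∀ s ∈ S, 0 ≤ p s)
    (hint : ∀ n : ℕ, IntegrableOn (fun s => p s * exp (-(n * ψ s))) S) {Δ : ℝ} (hΔ : 0 < Δ)
    (hψ : ∀ s ∈ S, Δ ≤ ψ s) :
    Tendsto (fun n : ℕ => n * ∫ s in S, p s * exp (-(n * ψ s))) atTop (𝓝 0) := by
  have hdecay : Tendsto (fun n : ℕ => n * exp (-(n * Δ)) * ∫ s in S, p s) atTop (𝓝 0) := by
    have := ((tendsto_pow_mul_exp_neg_atTop_nhds_zero 1).comp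
      (tendsto_natCast_atTop_atTop.atTop_mul_const hΔ)).mul_const ((∫ s in S, p s) / Δ)
    rw [zero_mul] at this
    refine this.congr fun n => ?_
    simp only [Function.comp_apply, pow_one]
    field_simp
  refine tendsto_of_tendsto_of_tendsto_of_le_of_le tendsto_const_nhds hdecay (fun n => ?_)
    fun n => ?_
  · exact mul_nonneg n.cast_nonneg
      (setIntegral_nonneg hS fun s hs => mul_nonneg (hp_nonneg s hs) (exp_pos _).le)
  · rw [mul_assoc, ← integral_const_mul (exp (-(n * Δ)))]
    refine mul_le_mul_of_nonneg_left (setIntegral_mono_on (hint n) (hp.const_mul _) hS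
      fun s hs => ?_) n.cast_nonneg
    rw [mul_comm]
    gcongr
    exacts [hp_nonneg s hs, hψ s hs]

theorem mul_setIntegral_mul_exp_neg_mul_mem_Icc {P x : ℝ} (hx : 0 ≤ x)
    (hint : IntegrableOn (fun s => p s * exp (-(x * ψ s))) (Ioo a a'))
    (hp_nonneg : ∀ s ∈ Ioo a a', 0 ≤ p s)
    (hloc : ∀ s ∈ Ioo a a', |p s - P| ≤ ε ∧ |ψ s - c * (s - a)| ≤ ε * (s - a)) :
    x * ∫ s in Ioo a a', p s * exp (-(x * ψ s)) ∈
      Icc ((P - ε) * (x * ∫ s in Ioo a a', exp (-(x * ((c + ε) * (s - a))))))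
        ((P + ε) * (x * ∫ s in Ioo a a', exp (-(x * ((c - ε) * (s - a)))))) := by
  have hexp_int (κ : ℝ) : IntegrableOn (fun s => exp (-(x * (κ * (s - a))))) (Ioo a a') :=
    (Continuous.integrableOn_Icc (by fun_prop)).mono_set Ioo_subset_Icc_self
  have hpointwise : ∀ s ∈ Ioo a a',
      (P - ε) * exp (-(x * ((c + ε) * (s - a)))) ≤ p s * exp (-(x * ψ s)) ∧
        p s * exp (-(x * ψ s)) ≤ (P + ε) * exp (-(x * ((c - ε) * (s - a)))) := by
    intro s hs
    obtain ⟨hp_s, hψ_s⟩ := hloc s hs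
    rw [abs_le] at hp_s hψ_s
    have := hp_nonneg s hs
    constructor
    · calc (P - ε) * exp (-(x * ((c + ε) * (s - a))))
          _ ≤ p s * exp (-(x * ((c + ε) * (s - a)))) := by gcongr; linarith
          _ ≤ p s * exp (-(x * ψ s)) := by gcongr; linarith
    · calc p s * exp (-(x * ψ s))
          _ ≤ p s * exp (-(x * ((c - ε) * (s - a)))) := by gcongr; linarith
          _ ≤ (P + ε) * exp (-(x * ((c - ε) * (s - a)))) := by gcongr; linarith
  rw [mul_left_comm _ x, mul_left_comm _ x, ← integral_const_mul (P - ε),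
    ← integral_const_mul (P + ε)]
  exact ⟨mul_le_mul_of_nonneg_left (setIntegral_mono_on ((hexp_int _).const_mul _) hint
      measurableSet_Ioo fun s hs => (hpointwise s hs).1) hx,
    mul_le_mul_of_nonneg_left (setIntegral_mono_on hint ((hexp_int _).const_mul _)
      measurableSet_Ioo fun s hs => (hpointwise s hs).2) hx⟩

theorem exists_Ioc_forall_abs_sub_le (hae : a < e) (hp : ContinuousWithinAt p (Ioi a) a)
    (hφ : HasDerivWithinAt φ c (Ici a) a) (hε : 0 < ε) :
    ∃ a' ∈ Ioo a e, ∀ s ∈ Ioc a a',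
      |p s - p a| ≤ ε ∧ |φ s - φ a - c * (s - a)| ≤ ε * (s - a) := by
  have hp_near : ∀ᶠ s in 𝓝[>] a, |p s - p a| ≤ ε :=
    hp.eventually (Metric.closedBall_mem_nhds (p a) hε)
  have hφ_near : ∀ᶠ s in 𝓝[>] a, |φ s - φ a - c * (s - a)| ≤ ε * (s - a) := by
    filter_upwards [((hasDerivWithinAt_iff_isLittleO.1 hφ).bound hε).filter_mono
      (nhdsWithin_mono _ Ioi_subset_Ici_self), self_mem_nhdsWithin] with s hs has
    rwa [Real.norm_eq_abs, Real.norm_eq_abs, abs_of_pos (sub_pos.2 has : 0 < s - a),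
      smul_eq_mul, mul_comm (s - a)] at hs
  have he_near : ∀ᶠ s in 𝓝[>] a, s < e := nhdsWithin_le_nhds (Iio_mem_nhds hae)
  obtain ⟨a', ha', hsub⟩ :=
    mem_nhdsGT_iff_exists_Ioc_subset.1 (hp_near.and (hφ_near.and he_near))
  exact ⟨a', ⟨ha', (hsub ⟨ha', le_rfl⟩).2.2⟩, fun s hs => ⟨(hsub hs).1, (hsub hs).2.1⟩⟩

theorem eventually_mul_integral_mul_exp_neg_mul_sub_mem_Icc (hae : a < e)
    (hp_nonneg : ∀ s ∈ Ioo a e, 0 ≤ p s) (hp_int : IntegrableOn p (Ioo a e))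
    (hp : ContinuousWithinAt p (Ioi a) a) (hφ_mono : MonotoneOn φ (Ico a e))
    (hφ : HasDerivWithinAt φ c (Ici a) a)
    (hint : ∀ n : ℕ, IntegrableOn (fun s => p s * exp (-(n * (φ s - φ a)))) (Ioo a e))
    (hε : ε ∈ Ioo 0 c) :
    ∀ᶠ n : ℕ in atTop, (n : ℝ) * ∫ s in Ioo a e, p s * exp (-(n * (φ s - φ a))) ∈
      Icc ((p a - ε) / (c + ε) - ε) ((p a + ε) / (c - ε) + ε) := by
  obtain ⟨hε₀, hεc⟩ := hε
  obtain ⟨a', ⟨haa', ha'e⟩, hloc⟩ := exists_Ioc_forall_abs_sub_le hae hp hφ hε₀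
  have hnear : Ioo a a' ⊆ Ioo a e := Ioo_subset_Ioo_right ha'e.le
  have hfar : Ico a' e ⊆ Ioo a e := Ico_subset_Ioo_left haa'
  have hsplit (n : ℕ) : ∫ s in Ioo a e, p s * exp (-(n * (φ s - φ a))) =
      (∫ s in Ioo a a', p s * exp (-(n * (φ s - φ a)))) +
        ∫ s in Ico a' e, p s * exp (-(n * (φ s - φ a))) := by
    rw [← Ioo_union_Ico_eq_Ioo haa' ha'e.le, setIntegral_union
      (Ico_disjoint_Ico_same.mono_left Ioo_subset_Ico_self) measurableSet_Ico
      ((hint n).mono_set hnear) ((hint n).mono_set hfar)]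
  have hnear_mem (n : ℕ) := mul_setIntegral_mul_exp_neg_mul_mem_Icc n.cast_nonneg
    ((hint n).mono_set hnear) (fun s hs => hp_nonneg s (hnear hs))
    fun s hs => hloc s (Ioo_subset_Ioc_self hs)
  -- beyond `a'`, monotonicity keeps `φ s - φ a` above `(c - ε) (a' - a) > 0`
  have htail := tendsto_mul_setIntegral_mul_exp_neg_mul_nhds_zero measurableSet_Ico
    (hp_int.mono_set hfar) (fun s hs => hp_nonneg s (hfar hs)) (fun n => (hint n).mono_set hfar)
    (mul_pos (sub_pos.2 hεc) (sub_pos.2 haa')) fun s hs => by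
      have h₁ := (abs_le.1 (hloc a' ⟨haa', le_rfl⟩).2).1
      have h₂ := hφ_mono ⟨haa'.le, ha'e⟩ (Ioo_subset_Ico_self (hfar hs)) hs.1
      nlinarith
  have htail_nonneg (n : ℕ) : 0 ≤ (n : ℝ) * ∫ s in Ico a' e, p s * exp (-(n * (φ s - φ a))) :=
    mul_nonneg n.cast_nonneg (setIntegral_nonneg measurableSet_Ico fun s hs =>
      mul_nonneg (hp_nonneg s (hfar hs)) (exp_pos _).le)
  have hlim_upper := ((tendsto_mul_integral_Ioo_exp_neg_mul_sub (sub_pos.2 hεc) haa').const_mul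
    (p a + ε)).add htail
  have hlim_lower := (tendsto_mul_integral_Ioo_exp_neg_mul_sub (by linarith : 0 < c + ε)
    haa').const_mul (p a - ε)
  rw [add_zero, ← div_eq_mul_inv] at hlim_upper
  rw [← div_eq_mul_inv] at hlim_lower
  filter_upwards [hlim_upper.eventually_lt_const (lt_add_of_pos_right _ hε₀),
    hlim_lower.eventually_const_lt (sub_lt_self _ hε₀)] with n hn_upper hn_lower
  rw [hsplit, mul_add]
  constructor
  · linarith [(hnear_mem n).1, htail_nonneg n]
  · linarith [(hnear_mem n).2]

theorem tendsto_mul_integral_mul_exp_neg_mul_sub (hae : a < e)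
    (hp_nonneg : ∀ s ∈ Ioo a e, 0 ≤ p s) (hp_int : IntegrableOn p (Ioo a e))
    (hp : ContinuousWithinAt p (Ioi a) a) (hφ_mono : MonotoneOn φ (Ico a e))
    (hφ : HasDerivWithinAt φ c (Ici a) a) (hc : 0 < c) :
    Tendsto (fun n : ℕ => (n : ℝ) * ∫ s in Ioo a e, p s * exp (-(n * (φ s - φ a))))
      atTop (𝓝 (p a / c)) := by
  have hint (n : ℕ) := integrableOn_mul_exp_neg_mul measurableSet_Ioo hp_int
    ((aemeasurable_restrict_of_monotoneOn measurableSet_Ioo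
      (hφ_mono.mono Ioo_subset_Ico_self)).sub_const (φ a))
    (fun s hs => sub_nonneg.2 (hφ_mono (left_mem_Ico.2 hae) (Ioo_subset_Ico_self hs) hs.1.le))
    (n.cast_nonneg (α := ℝ))
  refine tendsto_of_forall_eventually_mem_Icc (F := 𝓝[>] 0) ?_ ?_ <| mem_of_superset
    (Ioo_mem_nhdsGT hc) fun ε hε => eventually_mul_integral_mul_exp_neg_mul_sub_mem_Icc hae
      hp_nonneg hp_int hp hφ_mono hφ hint hε
  · have : ContinuousAt (fun ε => (p a - ε) / (c + ε) - ε) 0 := by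
      fun_prop (disch := simpa using hc.ne')
    simpa using this.tendsto.mono_left nhdsWithin_le_nhds
  · have : ContinuousAt (fun ε => (p a + ε) / (c - ε) + ε) 0 := by
      fun_prop (disch := simpa using hc.ne')
    simpa using this.tendsto.mono_left nhdsWithin_le_nhds

end Laplace

noncomputable def klBernoulli (θ₀ t : ℝ) : ℝ :=
  θ₀ * log (θ₀ / t) + (1 - θ₀) * log ((1 - θ₀) / (1 - t))

theorem hasDerivAt_mul_log_div (κ : ℝ) {t : ℝ} (ht : t ≠ 0) :
    HasDerivAt (fun t => κ * log (κ / t)) (-κ / t) t := by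
  rcases eq_or_ne κ 0 with rfl | hκ
  · simpa using hasDerivAt_const t (0 : ℝ)
  · have := (((hasDerivAt_inv ht).const_mul κ).log (div_ne_zero hκ ht)).const_mul κ
    rwa [show κ * (κ * -(t ^ 2)⁻¹ / (κ * t⁻¹)) = -κ / t by field_simp] at this

theorem hasDerivAt_klBernoulli (θ₀ : ℝ) {t : ℝ} (ht₀ : 0 < t) (ht₁ : t < 1) :
    HasDerivAt (klBernoulli θ₀) ((t - θ₀) / (t * (1 - t))) t := by
  have h₁ := hasDerivAt_mul_log_div θ₀ ht₀.ne'
  have h₂ := (hasDerivAt_mul_log_div (1 - θ₀) (sub_pos.2 ht₁).ne').comp t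
    ((hasDerivAt_id t).const_sub 1)
  refine (h₁.add h₂).congr_deriv ?_
  have : 1 - t ≠ 0 := (sub_pos.2 ht₁).ne'
  field_simp
  ring

theorem strictMonoOn_klBernoulli {θ₀ : ℝ} (hθ₀ : 0 < θ₀) :
    StrictMonoOn (klBernoulli θ₀) (Ico θ₀ 1) := by
  refine strictMonoOn_of_hasDerivWithinAt_pos (f' := fun t => (t - θ₀) / (t * (1 - t)))
    (convex_Ico θ₀ 1) (fun t ht => ?_) (fun t ht => ?_) fun t ht => ?_
  · exact (hasDerivAt_klBernoulli θ₀ (hθ₀.trans_le ht.1) ht.2).continuousAt.continuousWithinAt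
  · rw [interior_Ico] at ht
    exact (hasDerivAt_klBernoulli θ₀ (hθ₀.trans ht.1) ht.2).hasDerivWithinAt
  · rw [interior_Ico] at ht
    have := hθ₀.trans ht.1
    have := sub_pos.2 ht.2
    exact div_pos (sub_pos.2 ht.1) (by positivity)

theorem laplace_boundary
    (p : ℝ → ℝ) (hp_nonneg : ∀ t ∈ Ioo (0:ℝ) 1, 0 ≤ p t)
    (hp_cont : ContinuousOn p (Ioo (0:ℝ) 1))
    (hp_int : IntegrableOn p (Ioo (0:ℝ) 1))
    (θ₀ : ℝ) (hθ₀ : θ₀ ∈ Ioo (0:ℝ) 1)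
    (b : ℝ) (hb : b ∈ Ioo θ₀ 1) (hpb : 0 < p b)
    (d : ℝ → ℝ)
    (hd : ∀ t, d t = θ₀ * Real.log (θ₀ / t) + (1 - θ₀) * Real.log ((1 - θ₀) / (1 - t))) :
    Tendsto (fun n : ℕ =>
      (∫ s in Ioo b 1, p s * Real.exp (-(n : ℝ) * d s)) /
        ((1 / (n : ℝ)) * (p b / ((b - θ₀) / (b * (1 - b)))) * Real.exp (-(n : ℝ) * d b)))
      atTop (nhds 1) := by
  obtain rfl : d = klBernoulli θ₀ := funext hd
  have hb₀ : 0 < b := hθ₀.1.trans hb.1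
  have hsub : Ioo b 1 ⊆ Ioo 0 1 := Ioo_subset_Ioo_left hb₀.le
  have hc : 0 < (b - θ₀) / (b * (1 - b)) :=
    div_pos (sub_pos.2 hb.1) (mul_pos hb₀ (sub_pos.2 hb.2))
  have hlim := tendsto_mul_integral_mul_exp_neg_mul_sub hb.2 (fun s hs => hp_nonneg s (hsub hs))
    (hp_int.mono_set hsub) (hp_cont.continuousAt (Ioo_mem_nhds hb₀ hb.2)).continuousWithinAt
    ((strictMonoOn_klBernoulli hθ₀.1).monotoneOn.mono (Ico_subset_Ico_left hb.1.le))
    (hasDerivAt_klBernoulli θ₀ hb₀ hb.2).hasDerivWithinAt hc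
  have hL : p b / ((b - θ₀) / (b * (1 - b))) ≠ 0 := (div_pos hpb hc).ne'
  refine (div_self hL ▸ hlim.div_const _).congr' ?_
  filter_upwards [eventually_ne_atTop 0] with n hn
  have hn : (n : ℝ) ≠ 0 := Nat.cast_ne_zero.2 hn
  have hfactor (s : ℝ) : p s * exp (-(n * (klBernoulli θ₀ s - klBernoulli θ₀ b))) =
      p s * exp (-n * klBernoulli θ₀ s) * exp (n * klBernoulli θ₀ b) := by
    rw [mul_assoc, ← exp_add]
    ring_nf
  simp_rw [hfactor, integral_mul_const]
  rw [neg_mul, exp_neg]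
  field_simp
end
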